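/- The sequence of polynomials P_n defined by P_0(x)=1, P_1(x)=(x−λ_0)/w_0 and the recurrence x P_n(x) = w_{n−1}P_{n−1}(x) + λ_n P_n(x) + w_n P_{n+1}(x) satisfies, for all n ≥ 0 and all x with x ≠ λ_k for k < n, P_n(x) = (∏_{k=0}^{n−1} (x−λ_k)/w_k) · 𝔉({γ_k²/(λ_k−x)}_{k=0}^{n−1}), where γ_0 = 1 and γ_{k+1} = w_k/γ_k. -/

import Mathlib

open scoped BigOperators

/-- Admissible index tuples: k₁ ≥ 1 and k_{i+1} ≥ k_i + 2. -/
def FAdm (m : ℕ) (k : Fin m → ℕ) : Prop :=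
  (∀ i, 1 ≤ k i) ∧ ∀ i j : Fin m, (i : ℕ) + 1 = (j : ℕ) → k i + 2 ≤ k j

/-- The function 𝔉 given by the alternating multiple series
`𝔉(x) = 1 + ∑_{m≥1} (-1)^m ∑_{k₁≥1, k_{i+1}≥k_i+2} x_{k₁}x_{k₁+1}⋯x_{k_m}x_{k_m+1}`;
the sequence is indexed so that `x k` is `x_k` for `k ≥ 1`. -/
noncomputable def Fcal (x : ℕ → ℂ) : ℂ :=
  ∑' p : (Σ m : ℕ, { k : Fin m → ℕ // FAdm m k }),
    (-1 : ℂ) ^ p.1 * ∏ i, x (p.2.1 i) * x (p.2.1 i + 1)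

/-- 𝔉 of the finite sequence (x_1, …, x_n): x truncated after position n, padded by zeros. -/
noncomputable def FcalFin (n : ℕ) (x : ℕ → ℂ) : ℂ :=
  Fcal fun k => if k ≤ n then x k else 0

/-- 𝔉 of the finite segment (x_a, …, x_b); it equals 1 when the segment is empty (b = a-1)
and, by convention, 0 when b = a-2 (a segment of "length -1"). -/
noncomputable def Fseg (x : ℕ → ℂ) (a b : ℕ) : ℂ :=
  if b + 1 < a then 0 else FcalFin (b + 1 - a) (fun j => x (j + a - 1))

/-
The nonzero terms of `FcalFin n x` are indexed by the admissible tuples whose pairs `{k, k + 1}`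
lie in `[1, n]`. There are finitely many of them, and for `n + 2` such a tuple either stays inside
`[1, n + 1]` or ends with the pair `{n + 1, n + 2}`; this gives the continuant recurrence
`𝔉ₙ₊₂ = 𝔉ₙ₊₁ - xₙ₊₁ xₙ₊₂ 𝔉ₙ`. Because `γₙ γₙ₊₁ = wₙ`, the product `xₙ₊₁ xₙ₊₂` is
`wₙ² / ((λₙ - x)(λₙ₊₁ - x))`, and the recurrence turns into the three-term recurrence of `Pₙ`
for the right-hand side, which also has the initial values of `P₀` and `P₁`.
-/

namespace FAdm

variable {m : ℕ} {k : Fin m → ℕ}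

lemma add_two_le (h : FAdm m k) {i j : Fin m} (hij : i < j) : k i + 2 ≤ k j := by
  obtain ⟨j, hj⟩ := j
  induction j with
  | zero => exact absurd (Fin.lt_def.mp hij) (Nat.not_lt_zero _)
  | succ j ih =>
    have hstep := h.2 ⟨j, by omega⟩ ⟨j + 1, hj⟩ rfl
    rcases Nat.lt_succ_iff_lt_or_eq.mp (Fin.lt_def.mp hij) with hlt | hji
    · have := ih (by omega) (Fin.lt_def.mpr hlt)
      omega
    · subst hji
      exact hstep

lemma init {k : Fin (m + 1) → ℕ} (h : FAdm (m + 1) k) : FAdm m (Fin.init k) :=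
  ⟨fun i => h.1 _, fun i j hij => h.2 _ _ (by simpa using hij)⟩

lemma snoc (h : FAdm m k) {a : ℕ} (ha : 1 ≤ a) (hk : ∀ i, k i + 2 ≤ a) :
    FAdm (m + 1) (Fin.snoc k a) := by
  refine ⟨Fin.lastCases (by simpa) fun i => by simpa using h.1 i, fun i j hij => ?_⟩
  induction i using Fin.lastCases with
  | last => simp at hij; omega
  | cast i =>
    induction j using Fin.lastCases with
    | last => simpa using hk i
    | cast j => simpa using h.2 i j (by simpa using hij)

end FAdm

abbrev AdmTuple : Type := Σ m : ℕ, { k : Fin m → ℕ // FAdm m k }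

namespace AdmTuple

noncomputable def term (x : ℕ → ℂ) (p : AdmTuple) : ℂ :=
  (-1) ^ p.1 * ∏ i, x (p.2.1 i) * x (p.2.1 i + 1)

def empty : AdmTuple := ⟨0, Fin.elim0, fun i => i.elim0, fun i => i.elim0⟩

def snoc (p : AdmTuple) (a : ℕ) (ha : 1 ≤ a) (hp : ∀ i, p.2.1 i + 2 ≤ a) : AdmTuple :=
  ⟨p.1 + 1, Fin.snoc p.2.1 a, p.2.2.snoc ha hp⟩

def dropLast : AdmTuple → AdmTuple
  | ⟨0, k⟩ => ⟨0, k⟩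
  | ⟨m + 1, k⟩ => ⟨m, Fin.init k.1, k.2.init⟩

lemma dropLast_snoc (p : AdmTuple) (a : ℕ) (ha : 1 ≤ a) (hp : ∀ i, p.2.1 i + 2 ≤ a) :
    dropLast (snoc p a ha hp) = p := by
  obtain ⟨m, k, hk⟩ := p
  simp only [snoc, dropLast, Fin.init_snoc]

lemma term_snoc (x : ℕ → ℂ) (p : AdmTuple) (a : ℕ) (ha : 1 ≤ a) (hp : ∀ i, p.2.1 i + 2 ≤ a) :
    term x (snoc p a ha hp) = -(x a * x (a + 1)) * term x p := by
  show (-1) ^ (p.1 + 1) * ∏ i, x (Fin.snoc (α := fun _ => ℕ) p.2.1 a i) *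
    x (Fin.snoc (α := fun _ => ℕ) p.2.1 a i + 1) = -(x a * x (a + 1)) * term x p
  rw [Fin.prod_univ_castSucc]
  simp only [term, Fin.snoc_castSucc, Fin.snoc_last, pow_succ]
  ring

def supportedIn (n : ℕ) : Set AdmTuple := {p | ∀ i, p.2.1 i + 1 ≤ n}

def extend (n : ℕ) (p : supportedIn n) : AdmTuple :=
  snoc p (n + 1) n.succ_pos fun i => by have := p.2 i; omega

lemma extend_injective (n : ℕ) : Function.Injective (extend n) := fun p q h =>
  Subtype.ext <| by simpa only [extend, dropLast_snoc] using congrArg dropLast h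

lemma supportedIn_of_le_one {n : ℕ} (hn : n ≤ 1) : supportedIn n = {empty} := by
  ext ⟨m, k, hk⟩
  simp only [supportedIn, Set.mem_ofPred_eq, Set.mem_singleton_iff]
  cases m with
  | zero =>
    exact iff_of_true (fun i => i.elim0)
      (Sigma.ext rfl (heq_of_eq (Subtype.ext (funext fun i => i.elim0))))
  | succ m =>
    exact iff_of_false (fun h => by have := h 0; have := hk.1 0; omega) (fun h => by cases h)

lemma supportedIn_add_two (n : ℕ) :
    supportedIn (n + 2) = supportedIn (n + 1) ∪ Set.range (extend n) := by
  ext p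
  constructor
  · obtain ⟨M, k, hk⟩ := p
    intro (hp : ∀ i, k i + 1 ≤ n + 2)
    by_cases hsmall : ∀ i, k i + 1 ≤ n + 1
    · exact Or.inl hsmall
    push Not at hsmall
    obtain ⟨i, hi⟩ := hsmall
    have hki : k i = n + 1 := by have := hp i; omega
    obtain ⟨m, rfl⟩ : ∃ m, M = m + 1 := Nat.exists_eq_add_one.mpr i.pos
    have hlast : i = Fin.last m := by
      by_contra hne
      have := hk.add_two_le (Fin.lt_last_iff_ne_last.mpr hne)
      have := hp (Fin.last m)
      omega
    subst hlast
    refine Or.inr ⟨⟨⟨m, Fin.init k, hk.init⟩, fun (j : Fin m) => ?_⟩, ?_⟩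
    · have := hk.add_two_le (Fin.castSucc_lt_last j)
      simp only [Fin.init]
      omega
    · refine Sigma.ext rfl (heq_of_eq (Subtype.ext ?_))
      simp only [extend, snoc, ← hki, Fin.snoc_init_self]
  · rintro (hp | ⟨q, rfl⟩) i
    · have := hp i
      omega
    · induction i using Fin.lastCases with
      | last => simp [extend, snoc]
      | cast i =>
        have := q.2 i
        simp only [extend, snoc, Fin.snoc_castSucc]
        omega

lemma disjoint_supportedIn_range_extend (n : ℕ) :
    Disjoint (supportedIn (n + 1)) (Set.range (extend n)) := by
  rw [Set.disjoint_right]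
  rintro _ ⟨q, rfl⟩ hq
  have := hq (Fin.last _)
  simp [extend, snoc] at this

lemma supportedIn_finite (n : ℕ) : (supportedIn n).Finite := by
  induction n using Nat.twoStepInduction with
  | zero => simp [supportedIn_of_le_one]
  | one => simp [supportedIn_of_le_one]
  | more n hn hn1 =>
    have := hn.to_subtype
    rw [supportedIn_add_two]
    exact hn1.union (Set.finite_range _)

lemma term_truncate (n : ℕ) (x : ℕ → ℂ) :
    term (fun k => if k ≤ n then x k else 0) = (supportedIn n).indicator (term x) := by
  ext p
  by_cases hp : p ∈ supportedIn n
  · rw [Set.indicator_of_mem hp]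
    refine congrArg _ (Finset.prod_congr rfl fun i _ => ?_)
    have := hp i
    simp only [if_pos this, if_pos (show p.2.1 i ≤ n by omega)]
  · rw [Set.indicator_of_notMem hp]
    obtain ⟨i, hi⟩ : ∃ i, n < p.2.1 i + 1 := by simpa [supportedIn] using hp
    refine mul_eq_zero_of_right _ (Finset.prod_eq_zero (Finset.mem_univ i) ?_)
    simp only [if_neg (show ¬p.2.1 i + 1 ≤ n by omega), mul_zero]

end AdmTuple

open AdmTuple

lemma FcalFin_eq_tsum (n : ℕ) (x : ℕ → ℂ) : FcalFin n x = ∑' p : supportedIn n, term x p := by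
  rw [tsum_subtype, ← term_truncate]
  rfl

lemma FcalFin_of_le_one {n : ℕ} (hn : n ≤ 1) (x : ℕ → ℂ) : FcalFin n x = 1 := by
  rw [FcalFin_eq_tsum, supportedIn_of_le_one hn, tsum_singleton]
  exact (one_mul _).trans (Fin.prod_univ_zero _)

lemma FcalFin_add_two (n : ℕ) (x : ℕ → ℂ) :
    FcalFin (n + 2) x = FcalFin (n + 1) x - x (n + 1) * x (n + 2) * FcalFin n x := by
  have := (supportedIn_finite n).to_subtype
  have := (supportedIn_finite (n + 1)).to_subtype
  rw [FcalFin_eq_tsum, supportedIn_add_two, Summable.tsum_union_disjoint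
    (disjoint_supportedIn_range_extend n) Summable.of_finite Summable.of_finite,
    tsum_range _ (extend_injective n), FcalFin_eq_tsum, FcalFin_eq_tsum]
  simp only [extend, term_snoc, tsum_mul_left]
  ring

lemma mul_succ_eq_of_eq_div {w gam : ℕ → ℝ} (hw : ∀ k, w k ≠ 0) (hg0 : gam 0 ≠ 0)
    (hgrec : ∀ k, gam (k + 1) = w k / gam k) (k : ℕ) : gam k * gam (k + 1) = w k := by
  have hgam : ∀ k, gam k ≠ 0 := fun k => by
    induction k with
    | zero => exact hg0
    | succ k ih => rw [hgrec]; exact div_ne_zero (hw k) ih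
  rw [hgrec, mul_div_cancel₀ _ (hgam k)]

section FcalExpansion

variable (lam w gam : ℕ → ℝ)

noncomputable def fcalExpansion (n : ℕ) (x : ℝ) : ℂ :=
  (∏ k ∈ Finset.range n, ((x : ℂ) - lam k) / w k) *
    FcalFin n (fun j => ((gam (j - 1) : ℂ)) ^ 2 / ((lam (j - 1) : ℂ) - x))

lemma fcalExpansion_zero (x : ℝ) : fcalExpansion lam w gam 0 x = 1 := by
  simp [fcalExpansion, FcalFin_of_le_one]

lemma fcalExpansion_one (x : ℝ) : fcalExpansion lam w gam 1 x = ((x - lam 0) / w 0 : ℝ) := by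
  simp [fcalExpansion, FcalFin_of_le_one]

variable {lam w gam}

lemma fcalExpansion_add_two {n : ℕ} {x : ℝ} (hw : w n ≠ 0) (hw' : w (n + 1) ≠ 0)
    (hgw : gam n * gam (n + 1) = w n) (hx : x ≠ lam n) (hx' : x ≠ lam (n + 1)) :
    w (n + 1) * fcalExpansion lam w gam (n + 2) x =
      (x - lam (n + 1)) * fcalExpansion lam w gam (n + 1) x -
        w n * fcalExpansion lam w gam n x := by
  have hgw' : (gam n : ℂ) * gam (n + 1) = w n := by exact_mod_cast hgw
  have hwc : (w n : ℂ) ≠ 0 := by exact_mod_cast hw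
  have hwc' : (w (n + 1) : ℂ) ≠ 0 := by exact_mod_cast hw'
  have hxc : (lam n : ℂ) - x ≠ 0 := sub_ne_zero.mpr (by exact_mod_cast hx.symm)
  have hxc' : (lam (n + 1) : ℂ) - x ≠ 0 := sub_ne_zero.mpr (by exact_mod_cast hx'.symm)
  simp only [fcalExpansion, FcalFin_add_two, Finset.prod_range_succ]
  set y : ℕ → ℂ := fun j => (gam (j - 1) : ℂ) ^ 2 / ((lam (j - 1) : ℂ) - x)
  have hy : y (n + 1) * y (n + 2) = (w n : ℂ) ^ 2 / ((lam n - x) * (lam (n + 1) - x)) := by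
    simp only [y, Nat.add_sub_cancel, show n + 2 - 1 = n + 1 from rfl, div_mul_div_comm,
      ← mul_pow, hgw']
  rw [hy]
  field_simp
  ring

end FcalExpansion

/-- Orthonormal polynomials from the three-term recurrence expressed through 𝔉:
P_n(x) = (∏_{k<n} (x-λ_k)/w_k) · 𝔉({γ_k²/(λ_k-x)}_{k=0}^{n-1}),
where γ₀ = 1, γ_{k+1} = w_k/γ_k. -/
theorem stmt_6 (lam : ℕ → ℝ) (w : ℕ → ℝ) (hw : ∀ n, 0 < w n)
    (gam : ℕ → ℝ) (hg0 : gam 0 = 1) (hgrec : ∀ k, gam (k + 1) = w k / gam k)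
    (P : ℕ → ℝ → ℝ)
    (hP0 : ∀ x, P 0 x = 1) (hP1 : ∀ x, P 1 x = (x - lam 0) / w 0)
    (hPrec : ∀ (n : ℕ), 1 ≤ n → ∀ x : ℝ,
      x * P n x = w (n - 1) * P (n - 1) x + lam n * P n x + w n * P (n + 1) x) :
    ∀ (n : ℕ) (x : ℝ), (∀ k < n, x ≠ lam k) →
      (P n x : ℂ) = (∏ k ∈ Finset.range n, ((x : ℂ) - lam k) / w k) *
        FcalFin n (fun j => ((gam (j - 1) : ℂ))^2 / ((lam (j - 1) : ℂ) - x)) := by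
  have hw0 : ∀ k, w k ≠ 0 := fun k => (hw k).ne'
  have hgw := mul_succ_eq_of_eq_div hw0 (hg0 ▸ one_ne_zero) hgrec
  intro n x
  change (∀ k < n, x ≠ lam k) → (P n x : ℂ) = fcalExpansion lam w gam n x
  induction n using Nat.twoStepInduction with
  | zero => intro _; rw [hP0, fcalExpansion_zero, Complex.ofReal_one]
  | one => intro _; rw [hP1, fcalExpansion_one]
  | more n ih ih' =>
    intro hx
    have hrec : w (n + 1) * P (n + 2) x = (x - lam (n + 1)) * P (n + 1) x - w n * P n x := by
      have := hPrec (n + 1) n.succ_pos x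
      rw [Nat.add_sub_cancel] at this
      linear_combination -this
    refine mul_left_cancel₀ (Complex.ofReal_ne_zero.mpr (hw0 (n + 1))) ?_
    rw [fcalExpansion_add_two (hw0 n) (hw0 (n + 1)) (hgw n) (hx n (by omega))
      (hx (n + 1) (by omega)), ← ih fun k hk => hx k (by omega), ← ih' fun k hk => hx k (by omega)]
    exact_mod_cast hrec
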